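/- If (H,R) is a cylindrical bialgebra, i.e. there is a quasitriangular bialgebra automorphism φ of (H,R) and an invertible k ∈ H with Δ(k) = R₂₁·(1⊗k)·(φ⊗id)(R)·(k⊗1), then (φ, R₂₁⁻¹) is a twist pair and (H,R) is almost cylindrical with k-matrix k. -/

import Mathlib

noncomputable section
open TensorProduct

variable (F : Type*) [CommRing F] (H : Type*) [Ring H] [Bialgebra F H]

/-- The flip map on `H ⊗ H`. -/
def τ₂ : H ⊗[F] H ≃ₐ[F] H ⊗[F] H := Algebra.TensorProduct.comm F H H

/-- Embedding of `H ⊗ H` into the first two factors of `(H ⊗ H) ⊗ H`. -/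
def ι₁₂ : H ⊗[F] H →ₐ[F] (H ⊗[F] H) ⊗[F] H := Algebra.TensorProduct.includeLeft

/-- Embedding of `H ⊗ H` into the last two factors of `(H ⊗ H) ⊗ H`. -/
def ι₂₃ : H ⊗[F] H →ₐ[F] (H ⊗[F] H) ⊗[F] H :=
  Algebra.TensorProduct.map Algebra.TensorProduct.includeRight (AlgHom.id F H)

/-- Embedding of `H ⊗ H` into the outer factors of `(H ⊗ H) ⊗ H`. -/
def ι₁₃ : H ⊗[F] H →ₐ[F] (H ⊗[F] H) ⊗[F] H :=
  Algebra.TensorProduct.map Algebra.TensorProduct.includeLeft (AlgHom.id F H)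

/-- The image in `(H⊗H)ˣ` of a unit under the flip map. -/
def uflip (R : (H ⊗[F] H)ˣ) : (H ⊗[F] H)ˣ :=
  ⟨τ₂ F H ↑R, τ₂ F H ↑R⁻¹,
    by rw [← map_mul, Units.mul_inv, map_one],
    by rw [← map_mul, Units.inv_mul, map_one]⟩

/-- Conjugation by a unit, as an algebra automorphism. -/
def Ad {A : Type*} [Ring A] [Algebra F A] (u : Aˣ) : A ≃ₐ[F] A where
  toFun x := ↑u * x * ↑u⁻¹
  invFun x := ↑u⁻¹ * x * ↑u
  left_inv x := by simp [mul_assoc]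
  right_inv x := by simp [mul_assoc]
  map_mul' x y := by simp [mul_assoc]
  map_add' x y := by rw [mul_add, add_mul]
  commutes' r := by rw [← Algebra.commutes, mul_assoc, Units.mul_inv, mul_one]

/-- The unit `(g ⊗ g)` of `H ⊗ H` attached to a unit `g` of `H`. -/
def uTmul (g : Hˣ) : (H ⊗[F] H)ˣ :=
  ⟨(↑g : H) ⊗ₜ[F] (↑g : H), (↑g⁻¹ : H) ⊗ₜ[F] (↑g⁻¹ : H),
    by rw [Algebra.TensorProduct.tmul_mul_tmul, Units.mul_inv, ← Algebra.TensorProduct.one_def],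
    by rw [Algebra.TensorProduct.tmul_mul_tmul, Units.inv_mul, ← Algebra.TensorProduct.one_def]⟩

/-- The comultiplication of the bialgebra `H`. -/
def Δ : H →ₐ[F] H ⊗[F] H := Bialgebra.comulAlgHom F H

/-- The counit of the bialgebra `H`. -/
def ε : H →ₐ[F] F := Bialgebra.counitAlgHom F H

/-- The opposite comultiplication `Δ^op = flip ∘ Δ`. -/
def Δop : H →ₐ[F] H ⊗[F] H := (τ₂ F H).toAlgHom.comp (Δ F H)

/-- `(Δ ⊗ id)` as a map `H ⊗ H → (H ⊗ H) ⊗ H`. -/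
def Δ₁ : H ⊗[F] H →ₐ[F] (H ⊗[F] H) ⊗[F] H :=
  Algebra.TensorProduct.map (Δ F H) (AlgHom.id F H)

/-- `(id ⊗ Δ)`, reassociated into `(H ⊗ H) ⊗ H`. -/
def Δ₂ : H ⊗[F] H →ₐ[F] (H ⊗[F] H) ⊗[F] H :=
  ((Algebra.TensorProduct.assoc F F F H H H).symm.toAlgHom).comp
    (Algebra.TensorProduct.map (AlgHom.id F H) (Δ F H))

/-- Quasitriangularity of an invertible `R ∈ H ⊗ H` with respect to a coproduct `Δ'`:
`R Δ'(x) = Δ'^op(x) R`, `(Δ'⊗id)(R) = R₁₃R₂₃` and `(id⊗Δ')(R) = R₁₃R₁₂`. -/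
def IsQuasiTri (Δ' : H →ₐ[F] H ⊗[F] H) (R : (H ⊗[F] H)ˣ) : Prop :=
  (∀ x : H, (↑R : H ⊗[F] H) * Δ' x = τ₂ F H (Δ' x) * ↑R) ∧
  (Algebra.TensorProduct.map Δ' (AlgHom.id F H)) (↑R : H ⊗[F] H)
      = ι₁₃ F H ↑R * ι₂₃ F H ↑R ∧
  ((Algebra.TensorProduct.assoc F F F H H H).symm
      ((Algebra.TensorProduct.map (AlgHom.id F H) Δ') (↑R : H ⊗[F] H)))
      = ι₁₃ F H ↑R * ι₁₂ F H ↑R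

/-- The unit of `H ⊗ H` obtained by applying `Δ` to a unit of `H`. -/
def uComul (g : Hˣ) : (H ⊗[F] H)ˣ :=
  ⟨Δ F H ↑g, Δ F H ↑g⁻¹,
    by rw [← map_mul, Units.mul_inv, map_one],
    by rw [← map_mul, Units.inv_mul, map_one]⟩

/-- A Drinfeld twist: an invertible `J ∈ H ⊗ H` with `(ε⊗id)(J) = 1 = (id⊗ε)(J)`
satisfying the cocycle identity `(J⊗1)(Δ⊗id)(J) = (1⊗J)(id⊗Δ)(J)`. -/
def IsTwist (J : (H ⊗[F] H)ˣ) : Prop :=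
  (Algebra.TensorProduct.lid F H)
      ((Algebra.TensorProduct.map (ε F H) (AlgHom.id F H)) ↑J) = 1 ∧
  (Algebra.TensorProduct.rid F F H)
      ((Algebra.TensorProduct.map (AlgHom.id F H) (ε F H)) ↑J) = 1 ∧
  ι₁₂ F H ↑J * Δ₁ F H ↑J = ι₂₃ F H ↑J * Δ₂ F H ↑J

/-- A twist pair `(ψ, J)`: `Δ^{op,ψ} = Ad(J) ∘ Δ` and `(ψ⊗ψ)(R₂₁) = J₂₁ R J⁻¹`. -/
def TwistPair (R : (H ⊗[F] H)ˣ) (ψ : H ≃ₐ[F] H) (J : (H ⊗[F] H)ˣ) : Prop :=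
  (∀ x : H, (Algebra.TensorProduct.map ψ.toAlgHom ψ.toAlgHom)
      (τ₂ F H (Δ F H (ψ.symm x))) = ↑J * Δ F H x * ↑J⁻¹) ∧
  ((Algebra.TensorProduct.map ψ.toAlgHom ψ.toAlgHom) (τ₂ F H ↑R)
      = ↑(uflip F H J) * ↑R * ↑J⁻¹)

/-! Applying the flip to `R Δ(x) = Δ^op(x) R` gives `R₂₁ Δ^op(x) = Δ(x) R₂₁`, i.e.
`Δ^op = Ad(R₂₁⁻¹) ∘ Δ`. Since `φ ⊗ φ` commutes with the flip, respects `Δ` and fixes `R`,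
this makes `(φ, R₂₁⁻¹)` a twist pair, and the `k`-matrix identity is the given one because
`(R₂₁⁻¹)⁻¹ = R₂₁`. -/

section

variable {F H}

@[simp]
lemma τ₂_τ₂ (z : H ⊗[F] H) : τ₂ F H (τ₂ F H z) = z :=
  (τ₂ F H).symm_apply_apply z

lemma τ₂_map (f g : H →ₐ[F] H) (z : H ⊗[F] H) :
    τ₂ F H (Algebra.TensorProduct.map f g z) = Algebra.TensorProduct.map g f (τ₂ F H z) :=
  Algebra.TensorProduct.comm_comp_map_apply f g z

@[simp]
lemma coe_uflip (R : (H ⊗[F] H)ˣ) : (↑(uflip F H R) : H ⊗[F] H) = τ₂ F H ↑R := rfl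

lemma uflip_uflip (R : (H ⊗[F] H)ˣ) : uflip F H (uflip F H R) = R :=
  Units.ext (τ₂_τ₂ _)

lemma uflip_inv (R : (H ⊗[F] H)ˣ) : uflip F H R⁻¹ = (uflip F H R)⁻¹ := rfl

lemma flip_comul_eq_conj_uflip {R : (H ⊗[F] H)ˣ}
    (hRΔ : ∀ x : H, (↑R : H ⊗[F] H) * Δ F H x = τ₂ F H (Δ F H x) * ↑R) (x : H) :
    τ₂ F H (Δ F H x) = ↑(uflip F H R)⁻¹ * Δ F H x * ↑(uflip F H R) := by
  have hflip : ↑(uflip F H R) * τ₂ F H (Δ F H x) = Δ F H x * ↑(uflip F H R) := by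
    simpa only [map_mul, τ₂_τ₂, coe_uflip] using congrArg (τ₂ F H) (hRΔ x)
  rw [mul_assoc, ← hflip, Units.inv_mul_cancel_left]

theorem twistPair_inv_uflip {R : (H ⊗[F] H)ˣ}
    (hRΔ : ∀ x : H, (↑R : H ⊗[F] H) * Δ F H x = τ₂ F H (Δ F H x) * ↑R) (φ : H ≃ₐ[F] H)
    (hφΔ : ∀ x : H, Δ F H (φ x)
        = (Algebra.TensorProduct.map φ.toAlgHom φ.toAlgHom) (Δ F H x))
    (hφR : (Algebra.TensorProduct.map φ.toAlgHom φ.toAlgHom) ↑R = (↑R : H ⊗[F] H)) :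
    TwistPair F H R φ (uflip F H R)⁻¹ := by
  refine ⟨fun x => ?_, ?_⟩
  · rw [← τ₂_map, ← hφΔ, φ.apply_symm_apply, inv_inv, flip_comul_eq_conj_uflip hRΔ]
  · rw [← τ₂_map, hφR, inv_inv, ← uflip_inv, uflip_uflip, Units.inv_mul, one_mul, coe_uflip]

end

/-- a cylindrical bialgebra (a quasitriangular bialgebra
automorphism `φ` and invertible `k` with `Δ(k)=R₂₁(1⊗k)(φ⊗id)(R)(k⊗1)`) is
almost cylindrical: `(φ, R₂₁⁻¹)` is a twist pair and `k` satisfies the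
corresponding coproduct identity. -/
theorem cylindrical_is_almost_cylindrical (R : (H ⊗[F] H)ˣ)
    (hR : IsQuasiTri F H (Δ F H) R)
    (φ : H ≃ₐ[F] H)
    (hφΔ : ∀ x : H, Δ F H (φ x)
        = (Algebra.TensorProduct.map φ.toAlgHom φ.toAlgHom) (Δ F H x))
    (hφR : (Algebra.TensorProduct.map φ.toAlgHom φ.toAlgHom) ↑R = (↑R : H ⊗[F] H))
    (k : Hˣ)
    (hk : Δ F H ↑k
        = ↑(uflip F H R) * ((1 : H) ⊗ₜ[F] (↑k : H))
            * (Algebra.TensorProduct.map φ.toAlgHom (AlgHom.id F H)) ↑R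
            * ((↑k : H) ⊗ₜ[F] (1 : H))) :
    TwistPair F H R φ (uflip F H R)⁻¹ ∧
    (Δ F H ↑k
        = ↑((uflip F H R)⁻¹)⁻¹ * ((1 : H) ⊗ₜ[F] (↑k : H))
            * (Algebra.TensorProduct.map φ.toAlgHom (AlgHom.id F H)) ↑R
            * ((↑k : H) ⊗ₜ[F] (1 : H))) :=
  ⟨twistPair_inv_uflip hR.1 φ hφΔ hφR, by rwa [inv_inv]⟩

end
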